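/- arXiv:1008.0108 — 2 statements merged into one kernel-verified Lean document; each statement's English description precedes it below -/
import Mathlib

section
/- Let $T:X\to Y$ be a bounded linear operator between Hilbert spaces, $\{E_\lambda\}$ the spectral family of $T^*T$, and $\rho:(0,\|T\|^2]\to(0,\infty)$ continuous and strictly increasing. Suppose there exist constants $a>0$, $k>0$, and a family of piecewise continuous functions $r_\alpha:[0,\|T\|^2]\to\mathbb R$ ($\alpha\in(0,\alpha_0)$) satisfying $\rho(\lambda)|r_\alpha(\lambda)|\ge a\,\rho(\alpha)$ for all $0<k\alpha\le\lambda\le\|T\|^2$. If $x\in X$ satisfies $\|r_\alpha(T^*T)x\| = O(\rho(\alpha))$ as $\alpha\to 0^+$, then $\int_0^{\|T\|^2+}\rho^{-2}(\lambda)\,d\|E_\lambda x\|^2 < \infty$ and consequently $x\in\mathcal R(\rho(T^*T))$. -/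
open MeasureTheory

/-!
On `(kα, L]` the lower bound `a ρ(α) ≤ ρ |r_α|` gives `ρ⁻² ≤ r_α² / (a ρ(α))²`, so the
hypothesis `∫ r_α² dμ ≤ (C ρ(α))²` bounds `∫_{(kα, L]} ρ⁻² dμ` by `(C / a)²`, uniformly in `α`.
Letting `α → 0⁺`, the intervals `(kα, L]` exhaust `(0, L]`, which carries all of `μ`.
-/

theorem setLIntegral_Ioc_le_of_forall_Ioo {X : Type*} [LinearOrder X] [TopologicalSpace X]
    [OrderTopology X] [DenselyOrdered X] [FirstCountableTopology X] [MeasurableSpace X]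
    (μ : Measure X) (f : X → ENNReal) {a b c : X} {M : ENNReal} (hac : a < c)
    (h : ∀ ε ∈ Set.Ioo a c, ∫⁻ x in Set.Ioc ε b, f x ∂μ ≤ M) :
    ∫⁻ x in Set.Ioc a b, f x ∂μ ≤ M := by
  obtain ⟨u, hu_anti, hu_mem, hu_lim⟩ := exists_seq_strictAnti_tendsto' hac
  have hcover : Set.Ioc a b ⊆ ⋃ n, Set.Ioc (u n) b := fun x hx => by
    obtain ⟨n, hn⟩ := (hu_lim.eventually (gt_mem_nhds hx.1)).exists
    exact Set.mem_iUnion.2 ⟨n, hn, hx.2⟩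
  have hdir : Directed (· ⊆ ·) fun n => Set.Ioc (u n) b :=
    Monotone.directed_le fun m n hmn => Set.Ioc_subset_Ioc_left (hu_anti.antitone hmn)
  calc ∫⁻ x in Set.Ioc a b, f x ∂μ ≤ ∫⁻ x in ⋃ n, Set.Ioc (u n) b, f x ∂μ :=
        lintegral_mono_set hcover
    _ = ⨆ n, ∫⁻ x in Set.Ioc (u n) b, f x ∂μ := setLIntegral_iUnion_of_directed f hdir
    _ ≤ M := iSup_le fun n => h (u n) (hu_mem n)

theorem setLIntegral_inv_sq_le_of_le_mul_abs {X : Type*} [MeasurableSpace X] (μ : Measure X)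
    {ρ r : X → ℝ} {s : Set X} {b B : ℝ} (hs : MeasurableSet s) (hb : 0 < b)
    (hlow : ∀ x ∈ s, b ≤ ρ x * |r x|)
    (hr : ∫⁻ x, ENNReal.ofReal (r x ^ 2) ∂μ ≤ ENNReal.ofReal (B ^ 2)) :
    ∫⁻ x in s, ENNReal.ofReal ((ρ x)⁻¹ ^ 2) ∂μ ≤ ENNReal.ofReal ((B / b) ^ 2) := by
  have hpoint : ∀ x ∈ s, (ρ x)⁻¹ ^ 2 ≤ r x ^ 2 / b ^ 2 := fun x hx => by
    have hρ : 0 < ρ x := pos_of_mul_pos_left (hb.trans_le (hlow x hx)) (abs_nonneg _)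
    have hinv : (ρ x)⁻¹ ≤ |r x| / b := by
      rw [le_div_iff₀ hb, inv_mul_le_iff₀ hρ]
      exact hlow x hx
    calc (ρ x)⁻¹ ^ 2 ≤ (|r x| / b) ^ 2 := pow_le_pow_left₀ (by positivity) hinv 2
      _ = r x ^ 2 / b ^ 2 := by rw [div_pow, sq_abs]
  have hb2 : ENNReal.ofReal (b ^ 2) ≠ 0 := by positivity
  calc ∫⁻ x in s, ENNReal.ofReal ((ρ x)⁻¹ ^ 2) ∂μ
      ≤ ∫⁻ x in s, ENNReal.ofReal (r x ^ 2) / ENNReal.ofReal (b ^ 2) ∂μ := by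
        refine setLIntegral_mono' hs fun x hx => ?_
        rw [← ENNReal.ofReal_div_of_pos (by positivity)]
        exact ENNReal.ofReal_le_ofReal (hpoint x hx)
    _ = (∫⁻ x in s, ENNReal.ofReal (r x ^ 2) ∂μ) / ENNReal.ofReal (b ^ 2) :=
        lintegral_mul_const' _ _ (ENNReal.inv_ne_top.2 hb2)
    _ ≤ ENNReal.ofReal (B ^ 2) / ENNReal.ofReal (b ^ 2) := by
        gcongr
        exact (setLIntegral_le_lintegral s _).trans hr
    _ = ENNReal.ofReal ((B / b) ^ 2) := by
        rw [← ENNReal.ofReal_div_of_pos (by positivity), div_pow]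

/-- `μ` stands for the spectral measure `d‖E_λ x‖²` of `x`, so that
`‖r_α(T^*T)x‖² = ∫ r_α² dμ`, and finiteness of `∫ ρ⁻² dμ` is `x ∈ R(ρ(T^*T))`. -/
theorem stmt_8_general {L α0 : ℝ} (hL : 0 < L)
    (ρ : ℝ → ℝ)
    (hρpos : ∀ lam ∈ Set.Ioc (0:ℝ) L, 0 < ρ lam)
    (a k : ℝ) (ha : 0 < a) (hk : 0 < k)
    (r : ℝ → ℝ → ℝ)
    (hlow : ∀ α ∈ Set.Ioo (0:ℝ) α0, ∀ lam : ℝ,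
      k * α ≤ lam → lam ≤ L → a * ρ α ≤ ρ lam * |r α lam|)
    (μ : Measure ℝ) (hsupp : μ (Set.Ioc 0 L)ᶜ = 0)
    (C : ℝ) (αstar : ℝ) (hαstar : αstar ∈ Set.Ioc (0:ℝ) α0)
    (hO : ∀ α ∈ Set.Ioo (0:ℝ) αstar,
      (∫⁻ lam, ENNReal.ofReal ((r α lam) ^ 2) ∂μ) ≤ ENNReal.ofReal ((C * ρ α) ^ 2)) :
    (∫⁻ lam, ENNReal.ofReal (((ρ lam)⁻¹) ^ 2) ∂μ) < ⊤ := by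
  obtain ⟨hαstar0, hαstarα0⟩ := hαstar
  have hμ : μ.restrict (Set.Ioc 0 L) = μ :=
    Measure.restrict_eq_self_of_ae_mem (mem_ae_iff.2 hsupp)
  refine lt_of_le_of_lt ?_ (ENNReal.ofReal_lt_top (r := (C / a) ^ 2))
  rw [← hμ]
  refine setLIntegral_Ioc_le_of_forall_Ioo μ _ (c := k * min αstar L) (by positivity)
    fun ε hε => ?_
  set α := ε / k with hα
  have hkα : k * α = ε := by rw [hα]; field_simp
  have hα_mem : α ∈ Set.Ioo 0 αstar ∧ α ≤ L := by
    have hα_lt : α < min αstar L := by rw [hα, div_lt_iff₀' hk]; exact hε.2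
    exact ⟨⟨div_pos hε.1 hk, hα_lt.trans_le (min_le_left _ _)⟩,
      hα_lt.le.trans (min_le_right _ _)⟩
  have hρα : 0 < ρ α := hρpos α ⟨hα_mem.1.1, hα_mem.2⟩
  have hbound := setLIntegral_inv_sq_le_of_le_mul_abs μ measurableSet_Ioc (by positivity)
    (fun x hx => hlow α ⟨hα_mem.1.1, hα_mem.1.2.trans_le hαstarα0⟩ x (hkα ▸ hx.1.le) hx.2)
    (hO α hα_mem.1)
  rwa [mul_div_mul_right _ _ hρα.ne'] at hbound

/-- converse result for source conditions, measure-theoretic form.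
Here `μ` plays the role of the spectral measure `d‖E_λ x‖²` of `x` (supported on
`(0, ‖T‖²]`), so that `‖r_α(T^*T)x‖² = ∫ r_α(λ)² dμ(λ)`. If
`‖r_α(T^*T)x‖ = O(ρ(α))` as `α → 0⁺` and `ρ(λ)|r_α(λ)| ≥ a ρ(α)` for
`kα ≤ λ ≤ L`, then `∫ ρ(λ)⁻² dμ(λ) < ∞`, i.e. `x ∈ R(ρ(T^*T))`. -/
theorem stmt_8 {L α0 : ℝ} (hL : 0 < L) (hα0 : 0 < α0)
    (ρ : ℝ → ℝ) (hρcont : ContinuousOn ρ (Set.Ioc 0 L))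
    (hρmono : StrictMonoOn ρ (Set.Ioc 0 L))
    (hρpos : ∀ lam ∈ Set.Ioc (0:ℝ) L, 0 < ρ lam)
    (a k : ℝ) (ha : 0 < a) (hk : 0 < k)
    (r : ℝ → ℝ → ℝ)
    (hlow : ∀ α ∈ Set.Ioo (0:ℝ) α0, ∀ lam : ℝ,
      k * α ≤ lam → lam ≤ L → a * ρ α ≤ ρ lam * |r α lam|)
    (μ : Measure ℝ) [IsFiniteMeasure μ] (hsupp : μ (Set.Ioc 0 L)ᶜ = 0)
    (C : ℝ) (hC : 0 < C) (αstar : ℝ) (hαstar : αstar ∈ Set.Ioc (0:ℝ) α0)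
    (hO : ∀ α ∈ Set.Ioo (0:ℝ) αstar,
      (∫⁻ lam, ENNReal.ofReal ((r α lam) ^ 2) ∂μ) ≤ ENNReal.ofReal ((C * ρ α) ^ 2)) :
    (∫⁻ lam, ENNReal.ofReal (((ρ lam)⁻¹) ^ 2) ∂μ) < ⊤ :=
  stmt_8_general hL ρ hρpos a k ha hk r hlow μ hsupp C αstar hαstar hO
end

section
/- Let $\rho_1(\alpha)=\alpha^{\mu_0}$ with $\mu_0>0$ and let $\tilde\rho:(0,L]\to(0,\infty)$ be increasing. Suppose both $\rho_1$ and $\tilde\rho$ are maximal qualifications of a family $\{r_\alpha\}$, i.e., there exist constants $\gamma,\tilde\gamma>0$ with $\sup_{\lambda\in(0,L]}|r_\alpha(\lambda)|\rho_1(\lambda)\le\gamma\rho_1(\alpha)$ and $\sup_{\lambda\in(0,L]}|r_\alpha(\lambda)|\tilde\rho(\lambda)\le\tilde\gamma\tilde\rho(\alpha)$ for all $\alpha\in(0,\alpha_0)$, and for every $\lambda\in(0,L]$ there exist $c(\lambda),\tilde c(\lambda)>0$ with $\inf_{\alpha\in(0,\alpha_0)}|r_\alpha(\lambda)|/\rho_1(\alpha)\ge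 c(\lambda)$ and $\inf_{\alpha\in(0,\alpha_0)}|r_\alpha(\lambda)|/\tilde\rho(\alpha)\ge\tilde c(\lambda)$. Then $\rho_1$ and $\tilde\rho$ are equivalent: there exist constants $k,\tilde k>0$ such that $k\,\alpha^{\mu_0}\le\tilde\rho(\alpha)\le\tilde k\,\alpha^{\mu_0}$ for every $\alpha\in(0,\alpha_0)$. -/
/-!
Evaluate both bounds at the single point `λ = L`. The lower bound of one qualification there,
`c ρ(α) ≤ |r_α(L)|`, combined with the upper bound of the other, `|r_α(L)| σ(L) ≤ γ σ(α)`, gives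
`ρ(α) ≲ σ(α)` with a constant independent of `α`; doing this in both directions yields the
equivalence.
-/

theorem exists_pos_mul_le_of_qualification_of_lower_bound {T : Type*} {r : T → T → ℝ}
    {ρ σ : T → ℝ} {s : Set T} {lam : T} {γ : ℝ} (hγ : 0 < γ) (hσ : 0 < σ lam)
    (hup : ∀ α ∈ s, |r α lam| * σ lam ≤ γ * σ α)
    (hlow : ∃ c > 0, ∀ α ∈ s, c * ρ α ≤ |r α lam|) :
    ∃ k > 0, ∀ α ∈ s, k * ρ α ≤ σ α := by
  obtain ⟨c, hc, hlow⟩ := hlow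
  refine ⟨c * σ lam / γ, by positivity, fun α hα => ?_⟩
  rw [div_mul_eq_mul_div, div_le_iff₀ hγ]
  calc c * σ lam * ρ α = c * ρ α * σ lam := by ring
    _ ≤ |r α lam| * σ lam := mul_le_mul_of_nonneg_right (hlow α hα) hσ.le
    _ ≤ γ * σ α := hup α hα
    _ = σ α * γ := mul_comm _ _

theorem stmt_18_general (L α0 μ0 : ℝ) (hL : 0 < L)
    (ρ' : ℝ → ℝ)
    (hρ'pos : ∀ t ∈ Set.Ioc (0:ℝ) L, 0 < ρ' t)
    (r : ℝ → ℝ → ℝ) (γ γ' : ℝ) (hγ : 0 < γ) (hγ' : 0 < γ')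
    (hup1 : ∀ α ∈ Set.Ioo (0:ℝ) α0, ∀ lam ∈ Set.Ioc (0:ℝ) L,
      |r α lam| * lam ^ μ0 ≤ γ * α ^ μ0)
    (hup2 : ∀ α ∈ Set.Ioo (0:ℝ) α0, ∀ lam ∈ Set.Ioc (0:ℝ) L,
      |r α lam| * ρ' lam ≤ γ' * ρ' α)
    (hlow1 : ∀ lam ∈ Set.Ioc (0:ℝ) L, ∃ cl > 0, ∀ α ∈ Set.Ioo (0:ℝ) α0,
      cl * α ^ μ0 ≤ |r α lam|)
    (hlow2 : ∀ lam ∈ Set.Ioc (0:ℝ) L, ∃ cl > 0, ∀ α ∈ Set.Ioo (0:ℝ) α0,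
      cl * ρ' α ≤ |r α lam|) :
    ∃ k > 0, ∃ k' > 0, ∀ α ∈ Set.Ioo (0:ℝ) α0,
      k * α ^ μ0 ≤ ρ' α ∧ ρ' α ≤ k' * α ^ μ0 := by
  have hL_mem : L ∈ Set.Ioc (0:ℝ) L := ⟨hL, le_rfl⟩
  obtain ⟨k, hk, hlower⟩ := exists_pos_mul_le_of_qualification_of_lower_bound (ρ := (· ^ μ0))
    hγ' (hρ'pos L hL_mem) (fun α hα => hup2 α hα L hL_mem) (hlow1 L hL_mem)
  obtain ⟨k', hk', hupper⟩ := exists_pos_mul_le_of_qualification_of_lower_bound (σ := (· ^ μ0))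
    hγ (Real.rpow_pos_of_pos hL μ0) (fun α hα => hup1 α hα L hL_mem) (hlow2 L hL_mem)
  exact ⟨k, hk, k'⁻¹, inv_pos.2 hk', fun α hα =>
    ⟨hlower α hα, (le_inv_mul_iff₀ hk').2 (hupper α hα)⟩⟩

/-- two maximal qualifications `α^{μ₀}` and `ρ'` of the same family
of residuals `r_α` are equivalent up to multiplicative constants. -/
theorem stmt_18 (L α0 μ0 : ℝ) (hL : 0 < L) (hα0 : 0 < α0) (hα0L : α0 ≤ L)
    (hμ0 : 0 < μ0)
    (ρ' : ℝ → ℝ) (hρ'mono : MonotoneOn ρ' (Set.Ioc 0 L))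
    (hρ'pos : ∀ t ∈ Set.Ioc (0:ℝ) L, 0 < ρ' t)
    (r : ℝ → ℝ → ℝ) (γ γ' : ℝ) (hγ : 0 < γ) (hγ' : 0 < γ')
    (hup1 : ∀ α ∈ Set.Ioo (0:ℝ) α0, ∀ lam ∈ Set.Ioc (0:ℝ) L,
      |r α lam| * lam ^ μ0 ≤ γ * α ^ μ0)
    (hup2 : ∀ α ∈ Set.Ioo (0:ℝ) α0, ∀ lam ∈ Set.Ioc (0:ℝ) L,
      |r α lam| * ρ' lam ≤ γ' * ρ' α)
    (hlow1 : ∀ lam ∈ Set.Ioc (0:ℝ) L, ∃ cl > 0, ∀ α ∈ Set.Ioo (0:ℝ) α0,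
      cl * α ^ μ0 ≤ |r α lam|)
    (hlow2 : ∀ lam ∈ Set.Ioc (0:ℝ) L, ∃ cl > 0, ∀ α ∈ Set.Ioo (0:ℝ) α0,
      cl * ρ' α ≤ |r α lam|) :
    ∃ k > 0, ∃ k' > 0, ∀ α ∈ Set.Ioo (0:ℝ) α0,
      k * α ^ μ0 ≤ ρ' α ∧ ρ' α ≤ k' * α ^ μ0 :=
  stmt_18_general L α0 μ0 hL ρ' hρ'pos r γ γ' hγ hγ' hup1 hup2 hlow1 hlow2
end
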